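/- (Theorem 2) Let u′ = ⌊n/2⌋ and I′ = { k : 2 ≤ k ≤ u′ and c_k > c_{n+1−k} }. Suppose the entries of c are positive and pairwise distinct and I′ is nonempty. Let c^{I′} be the sum-'n+1' transform of c, obtained by swapping c_k and c_{n+1−k} for every k ∈ I′. Then f(c^{I′}) > f(c), i.e. the sum-'n+1' transform produces a better sequence. -/
import Mathlib


open Finset

/-- Partial sums of the sequence `c` (1-indexed): `partSum c k = c 1 + ⋯ + c k`. -/
noncomputable def partSum (c : ℕ → ℝ) (k : ℕ) : ℝ := ∑ i ∈ Finset.Icc 1 k, c i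

/-- The mean `S̄` of the partial sums `s_1, …, s_n`. -/
noncomputable def meanPS (n : ℕ) (c : ℕ → ℝ) : ℝ :=
  (1 / (n : ℝ)) * ∑ k ∈ Finset.Icc 1 n, partSum c k

/-- The variance `f(c)` of the partial sums `s_1, …, s_n`. -/
noncomputable def varPS (n : ℕ) (c : ℕ → ℝ) : ℝ :=
  (1 / (n : ℝ)) * ∑ k ∈ Finset.Icc 1 n, (partSum c k - meanPS n c) ^ 2

/-- The `(i,j)`-partial mean `μ_{ij}(S) = (1/(j-i)) ∑_{k=i}^{j-1} s_k`. -/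
noncomputable def partMean (c : ℕ → ℝ) (i j : ℕ) : ℝ :=
  (1 / ((j : ℝ) - (i : ℝ))) * ∑ k ∈ Finset.Icc i (j - 1), partSum c k

/-- The `(i,j)`-interchange of `c`: swap the entries in positions `i` and `j`. -/
noncomputable def swapSeq (c : ℕ → ℝ) (i j : ℕ) : ℕ → ℝ := fun k => c (Equiv.swap i j k)

/-- `c` is an arrangement (permutation) of `a` on the index range `1..n`. -/
def IsArrangement (n : ℕ) (a c : ℕ → ℝ) : Prop :=
  ∃ σ : ℕ → ℕ, Set.BijOn σ (Set.Icc 1 n) (Set.Icc 1 n) ∧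
    ∀ k ∈ Set.Icc 1 n, c k = a (σ k)

/-- The dual sequence `c^d = (c_1, c_n, c_{n-1}, …, c_2)`. -/
noncomputable def dualSeq (n : ℕ) (c : ℕ → ℝ) : ℕ → ℝ :=
  fun k => if 2 ≤ k then c (n + 2 - k) else c k

/-- Swap `c_k` and `c_{n+1-k}` simultaneously for every `k ∈ I` (where `I ⊆ {2,…,⌊n/2⌋}`,
so the swapped pairs are pairwise disjoint). -/
noncomputable def sumSwapN1 (n : ℕ) (I : Finset ℕ) (c : ℕ → ℝ) : ℕ → ℝ :=
  fun k => if k ∈ I ∨ n + 1 - k ∈ I then c (n + 1 - k) else c k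

/-- difference of the swapped pair -/
noncomputable def dd (n : ℕ) (c : ℕ → ℝ) (k : ℕ) : ℝ := c k - c (n + 1 - k)

/-- amount subtracted from the j-th partial sum -/
noncomputable def DD (n : ℕ) (I : Finset ℕ) (c : ℕ → ℝ) (j : ℕ) : ℝ :=
  ∑ k ∈ I, if k ≤ j ∧ j + k ≤ n then dd n c k else 0

lemma sumSwapN1_apply (n : ℕ) (I : Finset ℕ) (c : ℕ → ℝ)
    (hI : ∀ k ∈ I, 2 ≤ k ∧ 2 * k ≤ n) (i : ℕ) :
    sumSwapN1 n I c i = c i +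
      ∑ k ∈ I, ((if i = k then c (n + 1 - k) - c k else 0) +
                (if i = n + 1 - k then c k - c (n + 1 - k) else 0)) := by
  rw [Finset.sum_add_distrib]
  by_cases hi : i ∈ I
  · obtain ⟨hi2, hin⟩ := hI i hi
    have h1 : ∑ k ∈ I, (if i = k then c (n + 1 - k) - c k else 0)
        = c (n + 1 - i) - c i := by
      rw [Finset.sum_eq_single i]
      · simp
      · intro k hk hki
        rw [if_neg (by omega)]
      · intro h; exact absurd hi h
    have h2 : ∑ k ∈ I, (if i = n + 1 - k then c k - c (n + 1 - k) else 0) = 0 := by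
      apply Finset.sum_eq_zero
      intro k hk
      obtain ⟨hk2, hkn⟩ := hI k hk
      rw [if_neg (by omega)]
    rw [h1, h2]; simp only [sumSwapN1]; rw [ if_pos (Or.inl hi)]
    ring
  · by_cases hi' : n + 1 - i ∈ I
    · obtain ⟨hi2, hin⟩ := hI _ hi'
      have h1 : ∑ k ∈ I, (if i = k then c (n + 1 - k) - c k else 0) = 0 := by
        apply Finset.sum_eq_zero
        intro k hk
        rw [if_neg]
        rintro rfl; exact hi hk
      have h2 : ∑ k ∈ I, (if i = n + 1 - k then c k - c (n + 1 - k) else 0)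
          = c (n + 1 - i) - c i := by
        rw [Finset.sum_eq_single (n + 1 - i)]
        · rw [if_pos (by omega)]
          congr 2
          omega
        · intro k hk hki
          obtain ⟨hk2, hkn⟩ := hI k hk
          rw [if_neg (by omega)]
        · intro h; exact absurd hi' h
      rw [h1, h2]; simp only [sumSwapN1]; rw [ if_pos (Or.inr hi')]
      ring
    · have h1 : ∑ k ∈ I, (if i = k then c (n + 1 - k) - c k else 0) = 0 := by
        apply Finset.sum_eq_zero
        intro k hk
        rw [if_neg]
        rintro rfl; exact hi hk
      have h2 : ∑ k ∈ I, (if i = n + 1 - k then c k - c (n + 1 - k) else 0) = 0 := by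
        apply Finset.sum_eq_zero
        intro k hk
        obtain ⟨hk2, hkn⟩ := hI k hk
        rw [if_neg]
        intro h
        apply hi'
        have hik : n + 1 - i = k := by omega
        rw [hik]; exact hk
      rw [h1, h2]; simp only [sumSwapN1]; rw [ if_neg (by tauto)]
      ring
lemma partSum_swap (n : ℕ) (I : Finset ℕ) (c : ℕ → ℝ)
    (hI : ∀ k ∈ I, 2 ≤ k ∧ 2 * k ≤ n) (j : ℕ) :
    partSum (sumSwapN1 n I c) j = partSum c j - DD n I c j := by
  unfold partSum DD
  rw [Finset.sum_congr rfl (fun i _ => sumSwapN1_apply n I c hI i),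
    Finset.sum_add_distrib, Finset.sum_comm]
  have key : ∀ k ∈ I,
      (∑ i ∈ Finset.Icc 1 j, ((if i = k then c (n + 1 - k) - c k else 0) +
        (if i = n + 1 - k then c k - c (n + 1 - k) else 0)))
      = -(if k ≤ j ∧ j + k ≤ n then dd n c k else 0) := by
    intro k hk
    obtain ⟨hk2, hkn⟩ := hI k hk
    rw [Finset.sum_add_distrib, Finset.sum_ite_eq' (Finset.Icc 1 j) k,
      Finset.sum_ite_eq' (Finset.Icc 1 j) (n + 1 - k)]
    simp only [Finset.mem_Icc, dd]
    split_ifs <;> first | ring1 | (exfalso; omega)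
  rw [Finset.sum_congr rfl key, Finset.sum_neg_distrib]
  ring
lemma filter_Icc_eq (n a : ℕ) (ha : 1 ≤ a) (p : ℕ → Prop) [DecidablePred p]
    (hp : ∀ j, p j ↔ a ≤ j ∧ j + a ≤ n) :
    (Finset.Icc 1 n).filter p = Finset.Icc a (n - a) := by
  ext j
  simp only [Finset.mem_filter, Finset.mem_Icc, hp]
  omega

lemma sum_partSum (c : ℕ → ℝ) (n a b : ℕ) (hb : b ≤ n) :
    ∑ j ∈ Finset.Icc a b, partSum c j
      = ∑ i ∈ Finset.Icc 1 n, ((Finset.Icc (max i a) b).card : ℝ) * c i := by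
  unfold partSum
  have step1 : ∀ j ∈ Finset.Icc a b,
      ∑ i ∈ Finset.Icc 1 j, c i = ∑ i ∈ Finset.Icc 1 n, if i ≤ j then c i else 0 := by
    intro j hj
    rw [Finset.mem_Icc] at hj
    rw [← Finset.sum_filter]
    apply Finset.sum_congr _ (fun _ _ => rfl)
    ext x
    simp only [Finset.mem_filter, Finset.mem_Icc]
    omega
  rw [Finset.sum_congr rfl step1, Finset.sum_comm]
  apply Finset.sum_congr rfl
  intro i _
  rw [← Finset.sum_filter]
  have hf : (Finset.Icc a b).filter (fun j => i ≤ j) = Finset.Icc (max i a) b := by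
    ext x
    simp only [Finset.mem_filter, Finset.mem_Icc]
    omega
  rw [hf, Finset.sum_const, nsmul_eq_mul]

lemma varPS_eq (n : ℕ) (hn : 0 < n) (c : ℕ → ℝ) :
    varPS n c = (∑ k ∈ Finset.Icc 1 n, (partSum c k) ^ 2) / n
      - ((∑ k ∈ Finset.Icc 1 n, partSum c k) / n) ^ 2 := by
  have hn' : (n : ℝ) ≠ 0 := Nat.cast_ne_zero.mpr hn.ne'
  have hcard : (Finset.Icc 1 n).card = n := by rw [Nat.card_Icc]; omega
  unfold varPS meanPS
  have expand : ∀ k ∈ Finset.Icc 1 n,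
      (partSum c k - (1 / n) * ∑ j ∈ Finset.Icc 1 n, partSum c j) ^ 2
      = (partSum c k) ^ 2
        - (2 * (1 / n) * ∑ j ∈ Finset.Icc 1 n, partSum c j) * partSum c k
        + ((1 / n) * ∑ j ∈ Finset.Icc 1 n, partSum c j) ^ 2 := fun k _ => by ring
  rw [Finset.sum_congr rfl expand, Finset.sum_add_distrib, Finset.sum_sub_distrib,
    ← Finset.mul_sum, Finset.sum_const, hcard, nsmul_eq_mul]
  field_simp
  ring
lemma card_cast (n a : ℕ) (h : 2 * a ≤ n) :
    ((Finset.Icc a (n - a)).card : ℝ) = (n : ℝ) + 1 - 2 * a := by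
  have h1 : (Finset.Icc a (n - a)).card = n + 1 - 2 * a := by
    rw [Nat.card_Icc]; omega
  rw [h1, Nat.cast_sub (by omega)]
  push_cast
  ring

lemma sum_DD (n : ℕ) (I : Finset ℕ) (c : ℕ → ℝ) (hI : ∀ k ∈ I, 2 ≤ k ∧ 2 * k ≤ n) :
    ∑ j ∈ Finset.Icc 1 n, DD n I c j
      = ∑ k ∈ I, ((n : ℝ) + 1 - 2 * k) * dd n c k := by
  unfold DD
  rw [Finset.sum_comm]
  apply Finset.sum_congr rfl
  intro k hk
  obtain ⟨hk2, hkn⟩ := hI k hk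
  rw [← Finset.sum_filter, filter_Icc_eq n k (by omega) _ (fun j => Iff.rfl),
    Finset.sum_const, nsmul_eq_mul, card_cast n k hkn]

lemma sum_ps_DD (n : ℕ) (I : Finset ℕ) (c : ℕ → ℝ) (hI : ∀ k ∈ I, 2 ≤ k ∧ 2 * k ≤ n) :
    ∑ j ∈ Finset.Icc 1 n, partSum c j * DD n I c j
      = ∑ k ∈ I, dd n c k * ∑ j ∈ Finset.Icc k (n - k), partSum c j := by
  unfold DD
  have step : ∀ j ∈ Finset.Icc 1 n,
      partSum c j * ∑ k ∈ I, (if k ≤ j ∧ j + k ≤ n then dd n c k else 0)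
      = ∑ k ∈ I, (if k ≤ j ∧ j + k ≤ n then partSum c j * dd n c k else 0) := by
    intro j _
    rw [Finset.mul_sum]
    apply Finset.sum_congr rfl
    intro k _
    split_ifs <;> simp
  rw [Finset.sum_congr rfl step, Finset.sum_comm]
  apply Finset.sum_congr rfl
  intro k hk
  obtain ⟨hk2, hkn⟩ := hI k hk
  rw [← Finset.sum_filter, filter_Icc_eq n k (by omega) _ (fun j => Iff.rfl),
    Finset.mul_sum]
  apply Finset.sum_congr rfl
  intro j _
  ring

lemma sum_DD_sq (n : ℕ) (I : Finset ℕ) (c : ℕ → ℝ) (hI : ∀ k ∈ I, 2 ≤ k ∧ 2 * k ≤ n) :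
    ∑ j ∈ Finset.Icc 1 n, (DD n I c j) ^ 2
      = ∑ k ∈ I, ∑ l ∈ I, dd n c k * dd n c l * ((n : ℝ) + 1 - 2 * (max k l : ℕ)) := by
  unfold DD
  have step : ∀ j ∈ Finset.Icc 1 n,
      (∑ k ∈ I, (if k ≤ j ∧ j + k ≤ n then dd n c k else 0)) ^ 2
      = ∑ k ∈ I, ∑ l ∈ I,
          (if max k l ≤ j ∧ j + max k l ≤ n then dd n c k * dd n c l else 0) := by
    intro j _
    rw [sq, Finset.sum_mul_sum]
    apply Finset.sum_congr rfl
    intro k _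
    apply Finset.sum_congr rfl
    intro l _
    split_ifs with h1 h2 h3 h4 h5 <;> first | ring1 | (exfalso; omega) | (simp; omega)
  rw [Finset.sum_congr rfl step, Finset.sum_comm]
  apply Finset.sum_congr rfl
  intro k hk
  rw [Finset.sum_comm]
  apply Finset.sum_congr rfl
  intro l hl
  obtain ⟨hk2, hkn⟩ := hI k hk
  obtain ⟨hl2, hln⟩ := hI l hl
  rw [← Finset.sum_filter, filter_Icc_eq n (max k l) (by omega) _ (fun j => Iff.rfl),
    Finset.sum_const, nsmul_eq_mul, card_cast n (max k l) (by omega)]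
  ring
/-- coefficient of `c i` in `2*((n+1-2k)*S1 - n*G k)` -/
noncomputable def Lam (n k i : ℕ) : ℝ :=
  if i < k then -2 * ((n : ℝ) + 1 - 2 * k) * ((i : ℝ) - 1)
  else if i + k ≤ n then 2 * (2 * (k : ℝ) - 1) * ((i : ℝ) - 1) - 2 * n * ((k : ℝ) - 1)
  else 2 * ((n : ℝ) + 1 - 2 * k) * ((n : ℝ) + 1 - (i : ℝ))

lemma card_Icc_cast (a b : ℕ) (h : a ≤ b + 1) :
    ((Finset.Icc a b).card : ℝ) = (b : ℝ) + 1 - a := by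
  rw [Nat.card_Icc, Nat.cast_sub h]
  push_cast
  ring

lemma lin_part (n k : ℕ) (c : ℕ → ℝ) (hk2 : 2 ≤ k) (hkn : 2 * k ≤ n) :
    2 * (((n : ℝ) + 1 - 2 * k) * (∑ j ∈ Finset.Icc 1 n, partSum c j)
        - n * ∑ j ∈ Finset.Icc k (n - k), partSum c j)
    = ∑ i ∈ Finset.Icc 1 n, Lam n k i * c i := by
  rw [sum_partSum c n 1 n le_rfl, sum_partSum c n k (n - k) (by omega),
    Finset.mul_sum, Finset.mul_sum, ← Finset.sum_sub_distrib, Finset.mul_sum]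
  apply Finset.sum_congr rfl
  intro i hi
  rw [Finset.mem_Icc] at hi
  have hm1 : max i 1 = i := by omega
  have c1 : ((Finset.Icc (max i 1) n).card : ℝ) = (n : ℝ) + 1 - i := by
    rw [hm1, card_Icc_cast i n (by omega)]
  rw [c1]
  unfold Lam
  split_ifs with h1 h2
  · -- i < k
    have hm2 : max i k = k := by omega
    have c2 : ((Finset.Icc (max i k) (n - k)).card : ℝ) = (n : ℝ) + 1 - 2 * k := by
      rw [hm2, card_cast n k hkn]
    rw [c2]
    push_cast
    ring
  · -- k ≤ i, i + k ≤ n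
    have hm2 : max i k = i := by omega
    have c2 : ((Finset.Icc (max i k) (n - k)).card : ℝ) = (n : ℝ) - k + 1 - i := by
      rw [hm2, card_Icc_cast i (n - k) (by omega), Nat.cast_sub (by omega)]
    rw [c2]
    push_cast
    ring
  · -- i + k > n
    have c2 : ((Finset.Icc (max i k) (n - k)).card : ℝ) = 0 := by
      have : (Finset.Icc (max i k) (n - k)).card = 0 := by rw [Nat.card_Icc]; omega
      rw [this, Nat.cast_zero]
    rw [c2]
    push_cast
    ring
lemma lam_pair (n k i : ℕ) (hk2 : 2 ≤ k) (hkn : 2 * k ≤ n) (hi1 : 1 ≤ i)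
    (hiu : 2 * i ≤ n) :
    Lam n k i + Lam n k (n + 1 - i) = 2 * ((n : ℝ) + 1 - 2 * k) := by
  have hc : ((n + 1 - i : ℕ) : ℝ) = (n : ℝ) + 1 - i := by
    rw [Nat.cast_sub (by omega)]; push_cast; ring
  unfold Lam
  rw [hc]
  split_ifs with h1 h2 h3 h4 h5 h6 h7 h8 <;>
    first
      | (exfalso; omega)
      | (push_cast; ring1)
      | (have hik : i = k := by omega
         subst hik; push_cast; ring)

lemma lam_Q (n k i : ℕ) (hk2 : 2 ≤ k) (hkn : 2 * k ≤ n) (hi1 : 1 ≤ i)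
    (hiu : 2 * i ≤ n) :
    ((n : ℝ) * ((n : ℝ) + 1 - 2 * (max k i : ℕ))
      - ((n : ℝ) + 1 - 2 * k) * ((n : ℝ) + 1 - 2 * i)) + Lam n k i
    = (n : ℝ) + 1 - 2 * k := by
  unfold Lam
  rcases le_or_gt i k with h | h
  · rw [Nat.max_eq_left h]
    split_ifs with h1 h2 <;>
      first
        | (exfalso; omega)
        | (push_cast; ring1)
        | (have hik : i = k := by omega
           subst hik; push_cast; ring)
  · rw [Nat.max_eq_right h.le]
    split_ifs with h1 h2 <;>
      first
        | (exfalso; omega)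
        | (push_cast; ring1)

lemma lam_le (n k i : ℕ) (hk2 : 2 ≤ k) (hkn : 2 * k ≤ n) (hi1 : 1 ≤ i)
    (hiu : 2 * i ≤ n) :
    Lam n k i ≤ 2 * ((n : ℝ) + 1 - 2 * k) := by
  have hw : (0 : ℝ) ≤ (n : ℝ) + 1 - 2 * k := by
    have : (2 * k : ℝ) ≤ (n : ℝ) := by exact_mod_cast hkn
    linarith
  have hi1' : (1 : ℝ) ≤ (i : ℝ) := by exact_mod_cast hi1
  have hik : 2 * (i : ℝ) * (k : ℝ) ≤ (n : ℝ) * (k : ℝ) := by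
    have h1 : (2 * i : ℝ) ≤ (n : ℝ) := by exact_mod_cast hiu
    have h2 : (0 : ℝ) ≤ (k : ℝ) := by positivity
    nlinarith
  unfold Lam
  split_ifs with h1 h2
  · nlinarith
  · have hk2' : (2 : ℝ) ≤ (k : ℝ) := by exact_mod_cast hk2
    nlinarith
  · exfalso; omega

lemma lam_one (n k : ℕ) (hk2 : 2 ≤ k) : Lam n k 1 = 0 := by
  unfold Lam
  rw [if_pos (by omega)]
  norm_num

lemma lam_n (n k : ℕ) (hk2 : 2 ≤ k) (hkn : 2 * k ≤ n) :
    Lam n k n = 2 * ((n : ℝ) + 1 - 2 * k) := by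
  unfold Lam
  rw [if_neg (by omega), if_neg (by omega)]
  ring

lemma lam_mid (n k : ℕ) (hk2 : 2 ≤ k) (hkn : 2 * k ≤ n) (hodd : n = 2 * (n / 2) + 1) :
    Lam n k (n / 2 + 1) = (n : ℝ) + 1 - 2 * k := by
  have hn : (n : ℝ) = 2 * ((n / 2 : ℕ) : ℝ) + 1 := by exact_mod_cast congrArg Nat.cast hodd
  unfold Lam
  rw [if_neg (by omega), if_pos (by omega), hn]
  push_cast
  ring
lemma sum_reflect (n a b : ℕ) (F : ℕ → ℝ) (ha : 1 ≤ a) (hb : b ≤ n) :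
    ∑ i ∈ Finset.Icc a b, F i
      = ∑ i ∈ Finset.Icc (n + 1 - b) (n + 1 - a), F (n + 1 - i) := by
  apply Finset.sum_nbij' (i := fun x => n + 1 - x) (j := fun x => n + 1 - x)
  · intro x hx
    rw [Finset.mem_Icc] at *
    omega
  · intro x hx
    rw [Finset.mem_Icc] at *
    omega
  · intro x hx
    rw [Finset.mem_Icc] at hx
    omega
  · intro x hx
    rw [Finset.mem_Icc] at hx
    omega
  · intro x hx
    rw [Finset.mem_Icc] at hx
    have : n + 1 - (n + 1 - x) = x := by omega
    rw [this]

lemma sum_pairs (n : ℕ) (hn : 2 ≤ n) (F : ℕ → ℝ) :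
    ∑ i ∈ Finset.Icc 1 n, F i
      = (∑ i ∈ Finset.Icc 1 (n / 2), (F i + F (n + 1 - i)))
        + (if n = 2 * (n / 2) + 1 then F (n / 2 + 1) else 0) := by
  set u := n / 2 with hu
  have hun : u ≤ n := by omega
  have hsplit : Finset.Icc 1 n = Finset.Icc 1 u ∪ Finset.Icc (u + 1) n := by
    ext x
    simp only [Finset.mem_union, Finset.mem_Icc]
    omega
  have hdisj : Disjoint (Finset.Icc 1 u) (Finset.Icc (u + 1) n) := by
    rw [Finset.disjoint_left]
    intro x hx hx'
    rw [Finset.mem_Icc] at *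
    omega
  rw [hsplit, Finset.sum_union hdisj, Finset.sum_add_distrib]
  have hrefl : ∑ i ∈ Finset.Icc 1 u, F (n + 1 - i)
      = ∑ i ∈ Finset.Icc (n + 1 - u) n, F i := by
    rw [sum_reflect n (n + 1 - u) n F (by omega) le_rfl]
    have h1 : n + 1 - n = 1 := by omega
    have h2 : n + 1 - (n + 1 - u) = u := by omega
    rw [h1, h2]
  rw [hrefl]
  rcases Nat.even_or_odd n with he | ho
  · have hne : ¬ (n = 2 * u + 1) := by
      obtain ⟨m, hm⟩ := he
      omega
    rw [if_neg hne, add_zero]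
    congr 1
    have : n + 1 - u = u + 1 := by
      obtain ⟨m, hm⟩ := he
      omega
    rw [this]
  · have hyes : n = 2 * u + 1 := by
      obtain ⟨m, hm⟩ := ho
      omega
    rw [if_pos hyes]
    have hset : Finset.Icc (u + 1) n = insert (u + 1) (Finset.Icc (n + 1 - u) n) := by
      ext x
      simp only [Finset.mem_insert, Finset.mem_Icc]
      omega
    rw [hset, Finset.sum_insert (by rw [Finset.mem_Icc]; omega)]
    ring
lemma E_pos (n : ℕ) (c : ℕ → ℝ)
    (hpos : ∀ k, 1 ≤ k → k ≤ n → 0 < c k)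
    (I : Finset ℕ) (hIdef : I = (Finset.Icc 2 (n / 2)).filter (fun k => c (n + 1 - k) < c k))
    (k : ℕ) (hk : k ∈ I) :
    0 < (∑ l ∈ I, dd n c l * ((n : ℝ) * ((n : ℝ) + 1 - 2 * ((max k l : ℕ) : ℝ))
          - ((n : ℝ) + 1 - 2 * k) * ((n : ℝ) + 1 - 2 * l)))
        + ∑ i ∈ Finset.Icc 1 n, Lam n k i * c i := by
  have hkI : 2 ≤ k ∧ 2 * k ≤ n := by
    rw [hIdef, Finset.mem_filter, Finset.mem_Icc] at hk
    omega
  obtain ⟨hk2, hkn⟩ := hkI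
  have hn4 : 4 ≤ n := by omega
  have hw : (0 : ℝ) < (n : ℝ) + 1 - 2 * k := by
    have : (2 * k : ℝ) ≤ (n : ℝ) := by exact_mod_cast hkn
    linarith
  set u := n / 2 with hu
  have hIsub : I ⊆ Finset.Icc 1 u := by
    intro x hx
    rw [hIdef, Finset.mem_filter, Finset.mem_Icc] at hx
    rw [Finset.mem_Icc]
    omega
  have hA : ∑ l ∈ I, dd n c l * ((n : ℝ) * ((n : ℝ) + 1 - 2 * ((max k l : ℕ) : ℝ))
          - ((n : ℝ) + 1 - 2 * k) * ((n : ℝ) + 1 - 2 * l))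
      = ∑ i ∈ Finset.Icc 1 u, (if i ∈ I then
          dd n c i * ((n : ℝ) * ((n : ℝ) + 1 - 2 * ((max k i : ℕ) : ℝ))
          - ((n : ℝ) + 1 - 2 * k) * ((n : ℝ) + 1 - 2 * i)) else 0) := by
    rw [Finset.sum_ite_mem, Finset.inter_eq_right.mpr hIsub]
  rw [hA, sum_pairs n (by omega) (fun i => Lam n k i * c i), ← hu, ← add_assoc, ← Finset.sum_add_distrib]
  have hterm : ∀ i ∈ Finset.Icc 1 u,
      0 ≤ (if i ∈ I then
          dd n c i * ((n : ℝ) * ((n : ℝ) + 1 - 2 * ((max k i : ℕ) : ℝ))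
          - ((n : ℝ) + 1 - 2 * k) * ((n : ℝ) + 1 - 2 * i)) else 0)
        + (Lam n k i * c i + Lam n k (n + 1 - i) * c (n + 1 - i)) := by
    intro i hi
    rw [Finset.mem_Icc] at hi
    obtain ⟨hi1, hiu⟩ := hi
    have hiu2 : 2 * i ≤ n := by omega
    have hipos : 0 < c i := hpos i hi1 (by omega)
    have hjpos : 0 < c (n + 1 - i) := hpos (n + 1 - i) (by omega) (by omega)
    have hpair := lam_pair n k i hk2 hkn hi1 hiu2
    by_cases hiI : i ∈ I
    · rw [if_pos hiI]
      have hQ := lam_Q n k i hk2 hkn hi1 hiu2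
      have key : dd n c i * ((n : ℝ) * ((n : ℝ) + 1 - 2 * ((max k i : ℕ) : ℝ))
          - ((n : ℝ) + 1 - 2 * k) * ((n : ℝ) + 1 - 2 * i))
          + (Lam n k i * c i + Lam n k (n + 1 - i) * c (n + 1 - i))
          = ((n : ℝ) + 1 - 2 * k) * (c i + c (n + 1 - i)) := by
        unfold dd
        linear_combination (c i - c (n + 1 - i)) * hQ + c (n + 1 - i) * hpair
      rw [key]
      positivity
    · rw [if_neg hiI, zero_add]
      have hLle := lam_le n k i hk2 hkn hi1 hiu2
      have hLj : Lam n k (n + 1 - i) = 2 * ((n : ℝ) + 1 - 2 * k) - Lam n k i := by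
        linarith
      rw [hLj]
      by_cases hi1' : i = 1
      · subst hi1'
        rw [lam_one n k hk2]
        nlinarith
      · have hle : c i ≤ c (n + 1 - i) := by
          by_contra hcon
          push_neg at hcon
          apply hiI
          rw [hIdef, Finset.mem_filter, Finset.mem_Icc]
          exact ⟨⟨by omega, by omega⟩, hcon⟩
        rcases le_or_gt (Lam n k i) 0 with hL | hL
        · nlinarith [mul_nonneg (by linarith : (0:ℝ) ≤ -Lam n k i) (by linarith : (0:ℝ) ≤ c (n + 1 - i) - c i), mul_nonneg hw.le hjpos.le]
        · nlinarith [mul_nonneg (by linarith : (0:ℝ) ≤ 2 * ((n : ℝ) + 1 - 2 * k) - Lam n k i) hjpos.le, mul_pos hL hipos]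
  have h1mem : 1 ∈ Finset.Icc 1 u := by rw [Finset.mem_Icc]; omega
  have h1pos : 0 < (if (1:ℕ) ∈ I then
          dd n c 1 * ((n : ℝ) * ((n : ℝ) + 1 - 2 * ((max k 1 : ℕ) : ℝ))
          - ((n : ℝ) + 1 - 2 * k) * ((n : ℝ) + 1 - 2 * (1:ℕ))) else 0)
        + (Lam n k 1 * c 1 + Lam n k (n + 1 - 1) * c (n + 1 - 1)) := by
    have h1I : (1:ℕ) ∉ I := by
      intro h
      rw [hIdef, Finset.mem_filter, Finset.mem_Icc] at h
      omega
    rw [if_neg h1I, zero_add, lam_one n k hk2]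
    have hr : n + 1 - 1 = n := by omega
    rw [hr, lam_n n k hk2 hkn]
    have hcn : 0 < c n := hpos n (by omega) le_rfl
    nlinarith
  have hsum : 0 < ∑ i ∈ Finset.Icc 1 u, ((if i ∈ I then
          dd n c i * ((n : ℝ) * ((n : ℝ) + 1 - 2 * ((max k i : ℕ) : ℝ))
          - ((n : ℝ) + 1 - 2 * k) * ((n : ℝ) + 1 - 2 * i)) else 0)
        + (Lam n k i * c i + Lam n k (n + 1 - i) * c (n + 1 - i))) :=
    Finset.sum_pos' hterm ⟨1, h1mem, h1pos⟩
  have hmid : 0 ≤ (if n = 2 * u + 1 then Lam n k (u + 1) * c (u + 1) else 0) := by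
    split_ifs with ho
    · rw [lam_mid n k hk2 hkn (by omega)]
      have : 0 < c (u + 1) := hpos (u + 1) (by omega) (by omega)
      positivity
    · exact le_refl 0
  linarith
/-- Theorem 2: a sum-`n+1` transform always results in a better sequence. -/
theorem sumSwapN1_better (n : ℕ) (hn : 2 ≤ n) (c : ℕ → ℝ)
    (hpos : ∀ k, 1 ≤ k → k ≤ n → 0 < c k)
    (hdist : ∀ i j, 1 ≤ i → i ≤ n → 1 ≤ j → j ≤ n → i ≠ j → c i ≠ c j)
    (hne : ((Finset.Icc 2 (n / 2)).filter (fun k => c (n + 1 - k) < c k)).Nonempty) :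
    varPS n c <
      varPS n (sumSwapN1 n
        ((Finset.Icc 2 (n / 2)).filter (fun k => c (n + 1 - k) < c k)) c) := by
  classical
  set I := (Finset.Icc 2 (n / 2)).filter (fun k => c (n + 1 - k) < c k) with hIdef
  have hI : ∀ k ∈ I, 2 ≤ k ∧ 2 * k ≤ n := by
    intro k hk
    rw [hIdef, Finset.mem_filter, Finset.mem_Icc] at hk
    omega
  have hd : ∀ k ∈ I, 0 < dd n c k := by
    intro k hk
    rw [hIdef, Finset.mem_filter] at hk
    have := hk.2
    unfold dd
    linarith
  have hn0 : 0 < n := by omega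
  set S1 := ∑ j ∈ Finset.Icc 1 n, partSum c j with hS1
  set S2 := ∑ j ∈ Finset.Icc 1 n, (partSum c j) ^ 2 with hS2
  set T := ∑ j ∈ Finset.Icc 1 n, DD n I c j with hT
  set U := ∑ j ∈ Finset.Icc 1 n, partSum c j * DD n I c j with hU
  set V := ∑ j ∈ Finset.Icc 1 n, (DD n I c j) ^ 2 with hV
  -- Step A : the key algebraic identity
  have hDelta : (n : ℝ) * V - 2 * n * U + 2 * S1 * T - T ^ 2
      = ∑ k ∈ I, dd n c k *
          ((∑ l ∈ I, dd n c l * ((n : ℝ) * ((n : ℝ) + 1 - 2 * ((max k l : ℕ) : ℝ))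
            - ((n : ℝ) + 1 - 2 * k) * ((n : ℝ) + 1 - 2 * l)))
          + ∑ i ∈ Finset.Icc 1 n, Lam n k i * c i) := by
    rw [hT, hU, hV, sum_DD n I c hI, sum_ps_DD n I c hI, sum_DD_sq n I c hI,
      sq, Finset.sum_mul, Finset.mul_sum, Finset.mul_sum, Finset.mul_sum,
      ← Finset.sum_sub_distrib, ← Finset.sum_add_distrib, ← Finset.sum_sub_distrib]
    apply Finset.sum_congr rfl
    intro k hk
    obtain ⟨hk2, hkn⟩ := hI k hk
    have p1 : (n : ℝ) * (∑ l ∈ I, dd n c k * dd n c l * ((n : ℝ) + 1 - 2 * ((max k l : ℕ) : ℝ)))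
        = ∑ l ∈ I, (n : ℝ) * (dd n c k * dd n c l * ((n : ℝ) + 1 - 2 * ((max k l : ℕ) : ℝ))) := by
      rw [Finset.mul_sum]
    have p2 : (((n : ℝ) + 1 - 2 * k) * dd n c k) * (∑ l ∈ I, ((n : ℝ) + 1 - 2 * l) * dd n c l)
        = ∑ l ∈ I, (((n : ℝ) + 1 - 2 * k) * dd n c k) * (((n : ℝ) + 1 - 2 * l) * dd n c l) := by
      rw [Finset.mul_sum]
    have p3 : dd n c k * (∑ l ∈ I, dd n c l * ((n : ℝ) * ((n : ℝ) + 1 - 2 * ((max k l : ℕ) : ℝ))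
          - ((n : ℝ) + 1 - 2 * k) * ((n : ℝ) + 1 - 2 * l)))
        = ∑ l ∈ I, dd n c k * (dd n c l * ((n : ℝ) * ((n : ℝ) + 1 - 2 * ((max k l : ℕ) : ℝ))
          - ((n : ℝ) + 1 - 2 * k) * ((n : ℝ) + 1 - 2 * l))) := by
      rw [Finset.mul_sum]
    have hz : (∑ l ∈ I, (n : ℝ) * (dd n c k * dd n c l * ((n : ℝ) + 1 - 2 * ((max k l : ℕ) : ℝ))))
        - (∑ l ∈ I, (((n : ℝ) + 1 - 2 * k) * dd n c k) * (((n : ℝ) + 1 - 2 * l) * dd n c l))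
        - (∑ l ∈ I, dd n c k * (dd n c l * ((n : ℝ) * ((n : ℝ) + 1 - 2 * ((max k l : ℕ) : ℝ))
          - ((n : ℝ) + 1 - 2 * k) * ((n : ℝ) + 1 - 2 * l)))) = 0 := by
      rw [← Finset.sum_sub_distrib, ← Finset.sum_sub_distrib]
      apply Finset.sum_eq_zero
      intro l _
      ring
    linear_combination p1 - p2 - p3 + hz + dd n c k * (lin_part n k c hk2 hkn)
  -- Step B : positivity of the right-hand side
  have hpos' : 0 < (n : ℝ) * V - 2 * n * U + 2 * S1 * T - T ^ 2 := by
    rw [hDelta]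
    apply Finset.sum_pos _ hne
    intro k hk
    exact mul_pos (hd k hk) (E_pos n c hpos I hIdef k hk)
  -- Step C : conclusion
  have hps : ∀ j, partSum (sumSwapN1 n I c) j = partSum c j - DD n I c j :=
    partSum_swap n I c hI
  have hS1' : ∑ j ∈ Finset.Icc 1 n, partSum (sumSwapN1 n I c) j = S1 - T := by
    rw [hS1, hT, ← Finset.sum_sub_distrib]
    exact Finset.sum_congr rfl (fun j _ => hps j)
  have hS2' : ∑ j ∈ Finset.Icc 1 n, (partSum (sumSwapN1 n I c) j) ^ 2
      = S2 - 2 * U + V := by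
    rw [hS2, hU, hV, Finset.mul_sum, ← Finset.sum_sub_distrib, ← Finset.sum_add_distrib]
    apply Finset.sum_congr rfl
    intro j _
    rw [hps j]
    ring
  rw [varPS_eq n hn0 c, varPS_eq n hn0 (sumSwapN1 n I c), hS1', hS2']
  have hn' : (n : ℝ) ≠ 0 := Nat.cast_ne_zero.mpr hn0.ne'
  have hgap : ((S2 - 2 * U + V) / n - ((S1 - T) / n) ^ 2) - (S2 / n - (S1 / n) ^ 2)
      = ((n : ℝ) * V - 2 * n * U + 2 * S1 * T - T ^ 2) / (n : ℝ) ^ 2 := by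
    field_simp
    ring
  have : 0 < ((n : ℝ) * V - 2 * n * U + 2 * S1 * T - T ^ 2) / (n : ℝ) ^ 2 := by
    apply div_pos hpos'
    positivity
  linarith
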